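/- Let b₁, …, b₆, c₁, …, c₆, s₁, …, s₆ be real numbers with b₁ = b₃ = b₄ = b₆ = 0 and s₁ = s₄ = 0 (the Hooke double-spherical situation). Then the equalities Q₁⁺ = Q₄⁺ and Q₁⁻ = Q₄⁻ of polynomials in ℂ[x] hold if and only if s₂² + s₃² + b₂² − (c₂b₂)² + 2s₂s₃c₂ = s₅² + s₆² + b₅² − (c₅b₅)² + 2s₅s₆c₅. -/

import Mathlib

/-!
When `bᵢ = b_{i+2} = sᵢ = 0` the quad polynomial `Qᵢ⁺` collapses to `X² + qᵢ/4` with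
`qᵢ = s_{i+1}² + s_{i+2}² + b_{i+1}² − (c_{i+1}b_{i+1})² + 2 s_{i+1}s_{i+2}c_{i+1}` real.
The sign changes producing `Qᵢ⁻` fix `qᵢ`: the indices `i+1` and `i+2` have opposite parity
(also across the wrap-around, as 6 is even), so exactly one of `s_{i+1}, s_{i+2}` changes sign,
together with `c_{i+1}`. Hence both equalities reduce to `q₁ = q₄`.
-/

open Polynomial

noncomputable section

/-- The quad polynomial `Qᵢ⁺`, with 0-based indexing: `Qp b c s i` is `Q_{i+1}⁺` of the
parameters `b₁,…,b₆ = b 0,…,b 5`, etc. (indices mod 6). -/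
def Qp (b c s : Fin 6 → ℝ) (i : Fin 6) : Polynomial ℂ :=
  (X + C (((b (i+2) * c (i+2) - b i * c i : ℝ) : ℂ) / 2 - ((s i : ℝ) : ℂ) / 2 * Complex.I))^2
  + C (Complex.I / 2 * ((b i * s (i+1) + b (i+2) * s (i+2) + s (i+1) * b (i+2) * c (i+1)
        + s (i+2) * b i * c (i+1) : ℝ) : ℂ)
      - ((b i * b (i+2) * c (i+1) - s (i+1) * s (i+2) * c (i+1) : ℝ) : ℂ) / 2
      + (((s (i+1))^2 + (s (i+2))^2 - (b i)^2 + (b (i+1))^2 - (b (i+2))^2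
        - (b (i+1))^2 * (c (i+1))^2 : ℝ) : ℂ) / 4)

/-- The quad polynomial `Qᵢ⁻`: obtained from `Qᵢ⁺` by negating all `b j`, all `c j`,
and `s₂, s₄, s₆` (the `s j` with odd 0-based index `j`), keeping `s₁, s₃, s₅`. -/
def Qm (b c s : Fin 6 → ℝ) (i : Fin 6) : Polynomial ℂ :=
  Qp (fun j => -b j) (fun j => -c j) (fun j => if j.val % 2 = 1 then -s j else s j) i

def quadInvariant (b c s : Fin 6 → ℝ) (i : Fin 6) : ℝ :=
  s (i+1) ^ 2 + s (i+2) ^ 2 + b (i+1) ^ 2 - (c (i+1) * b (i+1)) ^ 2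
    + 2 * s (i+1) * s (i+2) * c (i+1)

theorem Qp_eq_of_vanishing {b c s : Fin 6 → ℝ} {i : Fin 6} (hb : b i = 0) (hb' : b (i+2) = 0)
    (hs : s i = 0) : Qp b c s i = X ^ 2 + C ((quadInvariant b c s i : ℂ) / 4) := by
  simp only [Qp, quadInvariant, hb, hb', hs]
  congr 1
  · simp
  · congr 1
    push_cast
    ring

theorem quadInvariant_neg (b c s : Fin 6 → ℝ) (i : Fin 6) :
    quadInvariant (fun j => -b j) (fun j => -c j) (fun j => if j.val % 2 = 1 then -s j else s j) i
      = quadInvariant b c s i := by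
  have parity : ∀ i : Fin 6, (i + 1).val % 2 = 1 ↔ ¬ (i + 2).val % 2 = 1 := by decide
  unfold quadInvariant
  by_cases h : (i + 1).val % 2 = 1
  · simp only [h, (parity i).1 h, if_true, if_false]
    ring
  · simp only [h, not_not.1 (mt (parity i).2 h), if_true, if_false]
    ring

theorem Qm_eq_of_vanishing {b c s : Fin 6 → ℝ} {i : Fin 6} (hb : b i = 0) (hb' : b (i+2) = 0)
    (hs : s i = 0) : Qm b c s i = X ^ 2 + C ((quadInvariant b c s i : ℂ) / 4) := by
  rw [Qm, Qp_eq_of_vanishing (by simp [hb]) (by simp [hb']) (by simp [hs]), quadInvariant_neg]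

/-- In the Hooke double-spherical situation (`b₁ = b₃ = b₄ = b₆ = 0`, `s₁ = s₄ = 0`),
the equalities `Q₁⁺ = Q₄⁺` and `Q₁⁻ = Q₄⁻` hold iff
`s₂² + s₃² + b₂² − (c₂b₂)² + 2s₂s₃c₂ = s₅² + s₆² + b₅² − (c₅b₅)² + 2s₅s₆c₅`. -/
theorem hooke_quad_equalities_iff (b c s : Fin 6 → ℝ)
    (hb1 : b 0 = 0) (hb3 : b 2 = 0) (hb4 : b 3 = 0) (hb6 : b 5 = 0)
    (hs1 : s 0 = 0) (hs4 : s 3 = 0) :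
    (Qp b c s 0 = Qp b c s 3 ∧ Qm b c s 0 = Qm b c s 3) ↔
      (s 1)^2 + (s 2)^2 + (b 1)^2 - (c 1 * b 1)^2 + 2 * s 1 * s 2 * c 1 =
        (s 4)^2 + (s 5)^2 + (b 4)^2 - (c 4 * b 4)^2 + 2 * s 4 * s 5 * c 4 := by
  rw [Qp_eq_of_vanishing hb1 hb3 hs1, Qp_eq_of_vanishing hb4 hb6 hs4,
    Qm_eq_of_vanishing hb1 hb3 hs1, Qm_eq_of_vanishing hb4 hb6 hs4, and_self,
    add_right_inj, C_inj, div_left_inj' (by norm_num), Complex.ofReal_inj]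
  rfl
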